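/- Let σ > 0 and μ ∈ ℝ, and let J be a C² solution of equation (R) with m(J) < 1. Let f ∈ F satisfy D^J f = 0, and let u ∈ U satisfy equation (1.1) with u(t,·) → f in F as t ↘ 0. Then ‖u(t,·)‖_u → 0 as t → ∞. -/

import Mathlib

open Set MeasureTheory Filter

/-- The sup norm `‖f‖_u = sup_{x ∈ [0,1]} |f(x)|`. -/
noncomputable def unorm (f : ℝ → ℝ) : ℝ := ⨆ x : Set.Icc (0:ℝ) 1, |f x|

/-- Membership in the space `F`: bounded on `[0,1]` and continuous on `(0,1)`. -/
def MemF (f : ℝ → ℝ) : Prop :=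
  (∃ C, ∀ x ∈ Set.Icc (0:ℝ) 1, |f x| ≤ C) ∧ ContinuousOn f (Set.Ioo 0 1)

/-- `u(t,·) → f` in `F` as `t ↘ 0`: uniform boundedness for `t ∈ (0,1]`, pointwise
convergence on `[0,1]`, and uniform convergence on compact subsets of `(0,1)`. -/
def ConvF (u : ℝ → ℝ → ℝ) (f : ℝ → ℝ) : Prop :=
  (∃ C, ∀ t ∈ Set.Ioc (0:ℝ) 1, ∀ x ∈ Set.Icc (0:ℝ) 1, |u t x| ≤ C) ∧
  (∀ x ∈ Set.Icc (0:ℝ) 1,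
    Filter.Tendsto (fun t => u t x) (nhdsWithin 0 (Set.Ioi 0)) (nhds (f x))) ∧
  (∀ K ⊆ Set.Ioo (0:ℝ) 1, IsCompact K →
    TendstoUniformlyOn (fun t x => u t x) f (nhdsWithin 0 (Set.Ioi 0)) K)

/-- time derivative `∂_t u`. -/
noncomputable def pt (u : ℝ → ℝ → ℝ) (t x : ℝ) : ℝ := deriv (fun s => u s x) t

/-- spatial derivative `∂_x u`, taken within `[0,1]` (one-sided at the boundary). -/
noncomputable def px (u : ℝ → ℝ → ℝ) (t x : ℝ) : ℝ :=
  derivWithin (fun y => u t y) (Set.Icc 0 1) x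

/-- second spatial derivative `∂_x² u`, taken within `[0,1]`. -/
noncomputable def pxx (u : ℝ → ℝ → ℝ) (t x : ℝ) : ℝ :=
  derivWithin (fun y => px u t y) (Set.Icc 0 1) x

/-- Membership in the space `U`: `C¹` in `t`, `C²` in `x` up to and including the spatial
boundary, bounded on `(0,1] × [0,1]`, with `∂_t u`, `∂_x u`, `∂_x² u` bounded on
`[T₁,T₂] × [0,1]` for all `0 < T₁ < T₂ < ∞`. -/
def MemU (u : ℝ → ℝ → ℝ) : Prop :=
  (∀ t ∈ Set.Ioi (0:ℝ), ∀ x ∈ Set.Icc (0:ℝ) 1,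
    DifferentiableAt ℝ (fun s => u s x) t ∧
    DifferentiableWithinAt ℝ (fun y => u t y) (Set.Icc 0 1) x ∧
    DifferentiableWithinAt ℝ (fun y => px u t y) (Set.Icc 0 1) x) ∧
  ContinuousOn (fun p : ℝ × ℝ => u p.1 p.2) (Set.Ioi 0 ×ˢ Set.Icc 0 1) ∧
  ContinuousOn (fun p : ℝ × ℝ => pt u p.1 p.2) (Set.Ioi 0 ×ˢ Set.Icc 0 1) ∧
  ContinuousOn (fun p : ℝ × ℝ => px u p.1 p.2) (Set.Ioi 0 ×ˢ Set.Icc 0 1) ∧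
  ContinuousOn (fun p : ℝ × ℝ => pxx u p.1 p.2) (Set.Ioi 0 ×ˢ Set.Icc 0 1) ∧
  (∃ C, ∀ t ∈ Set.Ioc (0:ℝ) 1, ∀ x ∈ Set.Icc (0:ℝ) 1, |u t x| ≤ C) ∧
  (∀ T₁ T₂ : ℝ, 0 < T₁ → T₁ < T₂ → ∃ C, ∀ t ∈ Set.Icc T₁ T₂, ∀ x ∈ Set.Icc (0:ℝ) 1,
    |pt u t x| ≤ C ∧ |px u t x| ≤ C ∧ |pxx u t x| ≤ C)

/-- `u` satisfies equation (1.1): `∂_t u = ½ ∂_x² u + μ ∂_x u` on `(0,∞) × (0,1)`, with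
`∂_t u(t,0) = -σ ∂_x u(t,0)` and `∂_t u(t,1) = σ ∂_x u(t,1)` for `t > 0`. -/
def SatEq (μ σ : ℝ) (u : ℝ → ℝ → ℝ) : Prop :=
  (∀ t ∈ Set.Ioi (0:ℝ), ∀ x ∈ Set.Ioo (0:ℝ) 1,
    pt u t x = (1/2) * pxx u t x + μ * px u t x) ∧
  (∀ t ∈ Set.Ioi (0:ℝ),
    pt u t 0 = -σ * px u t 0 ∧ pt u t 1 = σ * px u t 1)

/-- derivative within `[0,1]` (one-sided at the boundary). -/
noncomputable def dxI (f : ℝ → ℝ) (x : ℝ) : ℝ := derivWithin f (Set.Icc 0 1) x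

/-- The matrix `B(J)` associated to `J = (J₀, J₁)`. -/
noncomputable def BJ (μ σ : ℝ) (J₀ J₁ : ℝ → ℝ) : Matrix (Fin 2) (Fin 2) ℝ :=
  !![-(2*μ*σ) + (1/2) * dxI J₀ 0, -((1/2) * dxI J₀ 1);
     (1/2) * dxI J₁ 0, 2*μ*σ - (1/2) * dxI J₁ 1]

/-- `J = (J₀,J₁)` is a `C²` solution of the Riccati-type equation (R):
`½ J'' - μ J' + B(J) J = 0` on `[0,1]`, `J(0) = (2σ,0)ᵀ`, `J(1) = (0,2σ)ᵀ`. -/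
def SolvesR (μ σ : ℝ) (J₀ J₁ : ℝ → ℝ) : Prop :=
  (∀ x ∈ Set.Icc (0:ℝ) 1,
    DifferentiableWithinAt ℝ J₀ (Set.Icc 0 1) x ∧
    DifferentiableWithinAt ℝ (dxI J₀) (Set.Icc 0 1) x ∧
    DifferentiableWithinAt ℝ J₁ (Set.Icc 0 1) x ∧
    DifferentiableWithinAt ℝ (dxI J₁) (Set.Icc 0 1) x) ∧
  ContinuousOn (dxI (dxI J₀)) (Set.Icc 0 1) ∧
  ContinuousOn (dxI (dxI J₁)) (Set.Icc 0 1) ∧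
  (∀ x ∈ Set.Icc (0:ℝ) 1,
    (1/2) * dxI (dxI J₀) x - μ * dxI J₀ x
      + BJ μ σ J₀ J₁ 0 0 * J₀ x + BJ μ σ J₀ J₁ 0 1 * J₁ x = 0 ∧
    (1/2) * dxI (dxI J₁) x - μ * dxI J₁ x
      + BJ μ σ J₀ J₁ 1 0 * J₀ x + BJ μ σ J₀ J₁ 1 1 * J₁ x = 0) ∧
  J₀ 0 = 2*σ ∧ J₁ 0 = 0 ∧ J₀ 1 = 0 ∧ J₁ 1 = 2*σ

/-- `m(J) = max(∫₀¹ |J₀|, ∫₀¹ |J₁|)`. -/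
noncomputable def mJ (J₀ J₁ : ℝ → ℝ) : ℝ :=
  max (∫ x in (0:ℝ)..1, |J₀ x|) (∫ x in (0:ℝ)..1, |J₁ x|)

/-- `μ coth μ`, interpreted as `1` at `μ = 0`. -/
noncomputable def muCoth (μ : ℝ) : ℝ :=
  if μ = 0 then 1 else μ * Real.cosh μ / Real.sinh μ

/-- Condition (1.2): `m(J) ≤ 1` if `σ ≥ μ coth μ` and `m(J) < 1` if `σ < μ coth μ`. -/
def Cond12 (μ σ : ℝ) (J₀ J₁ : ℝ → ℝ) : Prop :=
  (muCoth μ ≤ σ → mJ J₀ J₁ ≤ 1) ∧ (σ < muCoth μ → mJ J₀ J₁ < 1)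

/-- `D^J f = (f(0) - ⟨f,J₀⟩, f(1) - ⟨f,J₁⟩)ᵀ`. -/
noncomputable def DJ (J₀ J₁ : ℝ → ℝ) (f : ℝ → ℝ) : Fin 2 → ℝ :=
  ![f 0 - ∫ x in (0:ℝ)..1, f x * J₀ x, f 1 - ∫ x in (0:ℝ)..1, f x * J₁ x]

open Topology Real Interval

/-!
Pairing (1.1) with `J` and integrating by parts, the boundary conditions of (1.1) and equation (R)
give `d/dt D^J u(t) = -B(J) D^J u(t)`. As `D^J u(t) → D^J f = 0` when `t → 0⁺`, Grönwall's
inequality forces `D^J u(t) = 0`: the boundary values of `u(t)` are its pairings with `J₀, J₁`,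
hence at most `m(J) sup |u|`. The maximum principle, with the barrier
`e^{-κ(t-s)} e^{-μx} cos(x - 1/2)`, `κ = (1 + μ²)/2`, then gives
`‖u(t)‖_u ≤ m(J) sup_{τ ≥ s} ‖u(τ)‖_u + K ‖u(s)‖_u e^{-κ(t-s)}`,
and since `m(J) < 1` the tail suprema of `‖u(t)‖_u` decay geometrically.
-/

lemma hasDerivAt_of_differentiableWithinAt_Icc {g : ℝ → ℝ} {a b x : ℝ}
    (hg : DifferentiableWithinAt ℝ g (Icc a b) x) (hx : x ∈ Ioo a b) :
    HasDerivAt g (derivWithin g (Icc a b) x) x := by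
  have hmem : Icc a b ∈ 𝓝 x := Icc_mem_nhds hx.1 hx.2
  rw [derivWithin_of_mem_nhds hmem]
  exact (hg.differentiableAt hmem).hasDerivAt

/-- If `f'' (a)` exceeded `0` at a local maximum, `f` would also have a local minimum at `a` by
the second derivative test, hence be locally constant, forcing `f'' (a) = 0`. -/
lemma IsLocalMax.secondDeriv_nonpos {f f' : ℝ → ℝ} {a c : ℝ} (hmax : IsLocalMax f a)
    (hf : ∀ᶠ y in 𝓝 a, HasDerivAt f (f' y) y) (hf' : HasDerivAt f' c a) : c ≤ 0 := by
  by_contra! hc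
  have hderiv : deriv f =ᶠ[𝓝 a] f' := hf.mono fun y hy => hy.deriv
  have hdd : deriv (deriv f) a = c := (hf'.congr_of_eventuallyEq hderiv).deriv
  have hmin : IsLocalMin f a :=
    isLocalMin_of_deriv_deriv_pos (hdd ▸ hc) hmax.deriv_eq_zero hf.self_of_nhds.continuousAt
  have hconst : f =ᶠ[𝓝 a] fun _ => f a :=
    (hmin.and hmax).mono fun y hy => le_antisymm hy.2 hy.1
  have hdd0 : deriv (deriv f) a = 0 := by
    rw [hconst.deriv.deriv_eq]
    simp
  linarith

lemma IsMaxOn.nonneg_of_hasDerivAt_right {h : ℝ → ℝ} {a b c : ℝ} (hmax : IsMaxOn h (Icc a b) b)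
    (hab : a < b) (hd : HasDerivAt h c b) : 0 ≤ c := by
  have hcone : a - b ∈ posTangentConeAt (Icc a b) b :=
    sub_mem_posTangentConeAt_of_segment_subset
      ((convex_Icc a b).segment_subset (right_mem_Icc.2 hab.le) (left_mem_Icc.2 hab.le))
  have := hmax.localize.hasFDerivWithinAt_nonpos hd.hasFDerivAt.hasFDerivWithinAt hcone
  rw [ContinuousLinearMap.toSpanSingleton_apply, smul_eq_mul] at this
  nlinarith

/-- Grönwall's bound from each `a ∈ (0,t]`, then `a → 0⁺`. -/
theorem eq_zero_of_norm_deriv_le_of_tendsto_zero {E : Type*} [NormedAddCommGroup E]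
    [NormedSpace ℝ E] {v v' : ℝ → E} {K : ℝ} (hv : ∀ t > 0, HasDerivAt v (v' t) t)
    (hK : ∀ t > 0, ‖v' t‖ ≤ K * ‖v t‖) (h0 : Tendsto v (𝓝[>] 0) (𝓝 0)) {t : ℝ} (ht : 0 < t) :
    v t = 0 := by
  have hbound : ∀ a ∈ Ioc 0 t, ‖v t‖ ≤ ‖v a‖ * exp (K * (t - a)) := by
    intro a ha
    have hpos : ∀ τ ∈ Icc a t, 0 < τ := fun τ hτ => ha.1.trans_le hτ.1
    have := norm_le_gronwallBound_of_norm_deriv_right_le (ε := 0)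
      (fun τ hτ => (hv τ (hpos τ hτ)).continuousAt.continuousWithinAt)
      (fun τ hτ => (hv τ (hpos τ (Ico_subset_Icc_self hτ))).hasDerivWithinAt) le_rfl
      (fun τ hτ => by simpa using hK τ (hpos τ (Ico_subset_Icc_self hτ))) t
      (right_mem_Icc.2 ha.2)
    rwa [gronwallBound_ε0] at this
  have hlim : Tendsto (fun a => ‖v a‖ * exp (K * (t - a))) (𝓝[>] 0) (𝓝 0) := by
    have hexp : Tendsto (fun a => exp (K * (t - a))) (𝓝[>] 0) (𝓝 (exp (K * (t - 0)))) :=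
      ((continuous_const.mul (continuous_const.sub continuous_id)).rexp.tendsto 0).mono_left
        nhdsWithin_le_nhds
    simpa using h0.norm.mul hexp
  exact norm_le_zero_iff.1 <| ge_of_tendsto hlim <|
    eventually_of_mem (Ioc_mem_nhdsGT ht) hbound

section AbstractDecay

variable {φ : ℝ → ℝ} {m K κ : ℝ}

/-- The estimate applied with `M = sup_{[s,t]} φ` absorbs `m M` into the left-hand side. -/
lemma le_mul_of_le_mul_sup_add_exp (hm : m < 1) (hK : 0 ≤ K) (hκ : 0 < κ) (hφ : ∀ t, 0 ≤ φ t)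
    (hbdd : ∀ s T, 0 < s → BddAbove (φ '' Icc s T))
    (hest : ∀ s T M, 0 < s → (∀ τ ∈ Icc s T, φ τ ≤ M) →
      ∀ t ∈ Icc s T, φ t ≤ m * M + K * φ s * exp (-κ * (t - s)))
    {s t : ℝ} (hs : 0 < s) (hst : s ≤ t) : φ t ≤ K / (1 - m) * φ s := by
  set M := sSup (φ '' Icc s t)
  have hle : ∀ τ ∈ Icc s t, φ τ ≤ M := fun τ hτ => le_csSup (hbdd s t hs) (mem_image_of_mem φ hτ)
  have hM : M ≤ m * M + K * φ s := by
    refine csSup_le ((nonempty_Icc.2 hst).image φ) ?_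
    rintro _ ⟨τ, hτ, rfl⟩
    have hE : exp (-κ * (τ - s)) ≤ 1 := exp_le_one_iff.2 (by nlinarith [hτ.1])
    linarith [hest s t M hs hle τ hτ, mul_le_of_le_one_right (mul_nonneg hK (hφ s)) hE]
  rw [div_mul_eq_mul_div, le_div_iff₀ (by linarith)]
  nlinarith [mul_le_mul_of_nonneg_right (hle t (right_mem_Icc.2 hst)) (sub_nonneg.2 hm.le)]

lemma tendsto_zero_of_tail_contraction {ψ : ℝ → ℝ} {q T₀ : ℝ} (hq0 : 0 ≤ q) (hq : q < 1)
    (hT₀ : 0 < T₀) (hφ : ∀ t, 0 ≤ φ t) (hφψ : ∀ s > 0, ∀ t ≥ s, φ t ≤ ψ s)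
    (hcontr : ∀ s > 0, ψ (s + T₀) ≤ q * ψ s) : Tendsto φ atTop (𝓝 0) := by
  have hiter : ∀ n : ℕ, ψ (1 + n * T₀) ≤ q ^ n * ψ 1 := by
    intro n
    induction n with
    | zero => simp
    | succ n ih =>
      calc ψ (1 + (n + 1 : ℕ) * T₀) = ψ (1 + n * T₀ + T₀) := by push_cast; ring_nf
        _ ≤ q * ψ (1 + n * T₀) := hcontr _ (by positivity)
        _ ≤ q * (q ^ n * ψ 1) := by gcongr
        _ = q ^ (n + 1) * ψ 1 := by ring
  rw [Metric.tendsto_atTop]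
  intro ε hε
  have hpow := (tendsto_pow_atTop_nhds_zero_of_lt_one hq0 hq).mul_const (ψ 1)
  rw [zero_mul] at hpow
  obtain ⟨n, hn⟩ := (hpow.eventually (gt_mem_nhds hε)).exists
  refine ⟨1 + n * T₀, fun t ht => ?_⟩
  rw [Real.dist_eq, sub_zero, abs_of_nonneg (hφ t)]
  exact ((hφψ _ (by positivity) t ht).trans (hiter n)).trans_lt hn

/-- The tail suprema `ψ s = sup_{t ≥ s} φ t`, finite by the previous lemma, contract by the factor
`(1 + m)/2` over any time step `T₀` with `K e^{-κ T₀} ≤ (1 - m)/2`. -/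
theorem tendsto_zero_of_le_mul_sup_add_exp (hm0 : 0 ≤ m) (hm : m < 1) (hK : 0 ≤ K) (hκ : 0 < κ)
    (hφ : ∀ t, 0 ≤ φ t) (hbdd : ∀ s T, 0 < s → BddAbove (φ '' Icc s T))
    (hest : ∀ s T M, 0 < s → (∀ τ ∈ Icc s T, φ τ ≤ M) →
      ∀ t ∈ Icc s T, φ t ≤ m * M + K * φ s * exp (-κ * (t - s))) :
    Tendsto φ atTop (𝓝 0) := by
  set ψ : ℝ → ℝ := fun s => sSup (φ '' Ici s)
  have hφψ : ∀ s > 0, ∀ t ≥ s, φ t ≤ ψ s := fun s hs t ht =>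
    le_csSup ⟨K / (1 - m) * φ s, by
      rintro _ ⟨τ, hτ, rfl⟩
      exact le_mul_of_le_mul_sup_add_exp hm hK hκ hφ hbdd hest hs hτ⟩ ⟨t, ht, rfl⟩
  have hexp : Tendsto (fun T => K * exp (-κ * T)) atTop (𝓝 0) := by
    simpa [Function.comp_def] using
      (tendsto_exp_neg_atTop_nhds_zero.comp (tendsto_id.const_mul_atTop hκ)).const_mul K
  obtain ⟨T₀, hKT₀, hT₀⟩ := ((hexp.eventually (ge_mem_nhds (half_pos (sub_pos.2 hm)))).and
    (eventually_gt_atTop 0)).exists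
  refine tendsto_zero_of_tail_contraction (ψ := ψ) (q := (1 + m) / 2) (by linarith) (by linarith)
    hT₀ hφ hφψ fun s hs => csSup_le (nonempty_Ici.image φ) ?_
  rintro _ ⟨t, ht, rfl⟩
  have hψs : 0 ≤ ψ s := (hφ s).trans (hφψ s hs s le_rfl)
  have hE : exp (-κ * (t - s)) ≤ exp (-κ * T₀) := exp_le_exp.2 (by nlinarith [mem_Ici.1 ht])
  have hKφ : K * φ s * exp (-κ * (t - s)) ≤ K * exp (-κ * T₀) * ψ s := by
    rw [mul_right_comm]
    exact mul_le_mul (mul_le_mul_of_nonneg_left hE hK) (hφψ s hs s le_rfl) (hφ s)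
      (by positivity)
  linarith [hest s t (ψ s) hs (fun τ hτ => hφψ s hs τ hτ.1) t ⟨by linarith [mem_Ici.1 ht], le_rfl⟩,
    mul_le_mul_of_nonneg_right hKT₀ hψs]

end AbstractDecay

def HasParabolicDerivs (z zt zx zxx : ℝ → ℝ → ℝ) (I : Set ℝ) : Prop :=
  ∀ t ∈ I, ∀ x ∈ Ioo (0:ℝ) 1, HasDerivAt (fun τ => z τ x) (zt t x) t ∧
    HasDerivAt (z t) (zx t x) x ∧ HasDerivAt (zx t) (zxx t x) x

namespace HasParabolicDerivs

variable {z zt zx zxx w wt wx wxx : ℝ → ℝ → ℝ} {I J : Set ℝ}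

lemma mono (hz : HasParabolicDerivs z zt zx zxx I) (hJI : J ⊆ I) :
    HasParabolicDerivs z zt zx zxx J :=
  fun t ht => hz t (hJI ht)

lemma sub (hz : HasParabolicDerivs z zt zx zxx I) (hw : HasParabolicDerivs w wt wx wxx I) :
    HasParabolicDerivs (fun t x => z t x - w t x) (fun t x => zt t x - wt t x)
      (fun t x => zx t x - wx t x) (fun t x => zxx t x - wxx t x) I := by
  intro t ht x hx
  obtain ⟨hzt, hzx, hzxx⟩ := hz t ht x hx
  obtain ⟨hwt, hwx, hwxx⟩ := hw t ht x hx
  exact ⟨hzt.sub hwt, hzx.sub hwx, hzxx.sub hwxx⟩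

lemma neg (hz : HasParabolicDerivs z zt zx zxx I) :
    HasParabolicDerivs (fun t x => -z t x) (fun t x => -zt t x) (fun t x => -zx t x)
      (fun t x => -zxx t x) I := by
  intro t ht x hx
  obtain ⟨hzt, hzx, hzxx⟩ := hz t ht x hx
  exact ⟨hzt.neg, hzx.neg, hzxx.neg⟩

end HasParabolicDerivs

/-- At an interior maximum `∂ₜz ≥ 0`, `∂ₓz = 0` and `∂ₓ²z ≤ 0`, contradicting strictness. -/
theorem nonpos_of_strictSubsolution {μ s T : ℝ} {z zt zx zxx : ℝ → ℝ → ℝ}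
    (hc : ContinuousOn (fun p : ℝ × ℝ => z p.1 p.2) (Icc s T ×ˢ Icc 0 1))
    (hz : HasParabolicDerivs z zt zx zxx (Ioc s T))
    (hsub : ∀ t ∈ Ioc s T, ∀ x ∈ Ioo (0:ℝ) 1, zt t x < 1/2 * zxx t x + μ * zx t x)
    (hinit : ∀ x ∈ Icc (0:ℝ) 1, z s x ≤ 0)
    (hbdry : ∀ t ∈ Icc s T, z t 0 ≤ 0 ∧ z t 1 ≤ 0) :
    ∀ t ∈ Icc s T, ∀ x ∈ Icc (0:ℝ) 1, z t x ≤ 0 := by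
  by_contra! hpos
  obtain ⟨t, ht, x, hx, hzpos⟩ := hpos
  obtain ⟨⟨t₀, x₀⟩, ⟨ht₀, hx₀⟩, hmax⟩ :=
    (isCompact_Icc.prod isCompact_Icc).exists_isMaxOn ⟨(t, x), ht, hx⟩ hc
  have hle : ∀ τ ∈ Icc s T, ∀ y ∈ Icc (0:ℝ) 1, z τ y ≤ z t₀ x₀ :=
    fun τ hτ y hy => hmax (mk_mem_prod hτ hy)
  have hz₀ : 0 < z t₀ x₀ := hzpos.trans_le (hle t ht x hx)
  have hst₀ : s < t₀ := ht₀.1.lt_of_ne (by rintro rfl; linarith [hinit x₀ hx₀])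
  have h0x₀ : 0 < x₀ := hx₀.1.lt_of_ne (by rintro rfl; linarith [(hbdry t₀ ht₀).1])
  have hx₀1 : x₀ < 1 := hx₀.2.lt_of_ne (by rintro rfl; linarith [(hbdry t₀ ht₀).2])
  have ht₀' : t₀ ∈ Ioc s T := ⟨hst₀, ht₀.2⟩
  have hIoo : Ioo (0:ℝ) 1 ∈ 𝓝 x₀ := Ioo_mem_nhds h0x₀ hx₀1
  obtain ⟨hzt, hzx, hzxx⟩ := hz t₀ ht₀' x₀ ⟨h0x₀, hx₀1⟩
  have hloc : IsLocalMax (z t₀) x₀ :=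
    eventually_of_mem hIoo fun y hy => hle t₀ ht₀ y (Ioo_subset_Icc_self hy)
  have hzx₀ : zx t₀ x₀ = 0 := hloc.hasDerivAt_eq_zero hzx
  have hzxx₀ : zxx t₀ x₀ ≤ 0 :=
    hloc.secondDeriv_nonpos (eventually_of_mem hIoo fun y hy => (hz t₀ ht₀' y hy).2.1) hzxx
  have hzt₀ : 0 ≤ zt t₀ x₀ :=
    IsMaxOn.nonneg_of_hasDerivAt_right (fun τ hτ => hle τ ⟨hτ.1, hτ.2.trans ht₀.2⟩ x₀ hx₀)
      hst₀ hzt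
  have := hsub t₀ ht₀' x₀ ⟨h0x₀, hx₀1⟩
  rw [hzx₀] at this
  linarith

/-- `A + B e^{-κ(t-s)} g(x)` solves `∂ₜ = ½ ∂ₓ² + μ ∂ₓ` for `κ = barrierRate μ`; the shift by `1/2`
keeps `cos` above `1/2` on `[0,1]`. -/
noncomputable def barrier (μ x : ℝ) : ℝ := exp (-μ * x) * cos (x - 1/2)

noncomputable def barrierDeriv (μ x : ℝ) : ℝ :=
  exp (-μ * x) * (-sin (x - 1/2) - μ * cos (x - 1/2))

noncomputable def barrierDeriv2 (μ x : ℝ) : ℝ :=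
  exp (-μ * x) * ((μ ^ 2 - 1) * cos (x - 1/2) + 2 * μ * sin (x - 1/2))

noncomputable def barrierRate (μ : ℝ) : ℝ := (1 + μ ^ 2) / 2

section Barrier

variable {μ x : ℝ}

lemma barrierRate_pos (μ : ℝ) : 0 < barrierRate μ := by
  unfold barrierRate
  positivity

lemma hasDerivAt_barrier (μ x : ℝ) : HasDerivAt (barrier μ) (barrierDeriv μ x) x := by
  have h₁ : HasDerivAt (fun y => -μ * y) (-μ) x := by simpa using (hasDerivAt_id x).const_mul (-μ)
  have h₂ : HasDerivAt (fun y : ℝ => y - 1/2) 1 x := (hasDerivAt_id x).sub_const _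
  exact (h₁.exp.mul h₂.cos).congr_deriv (by unfold barrierDeriv; ring)

lemma hasDerivAt_barrierDeriv (μ x : ℝ) :
    HasDerivAt (barrierDeriv μ) (barrierDeriv2 μ x) x := by
  have h₁ : HasDerivAt (fun y => -μ * y) (-μ) x := by simpa using (hasDerivAt_id x).const_mul (-μ)
  have h₂ : HasDerivAt (fun y : ℝ => y - 1/2) 1 x := (hasDerivAt_id x).sub_const _
  exact (h₁.exp.mul (h₂.sin.fun_neg.fun_sub (h₂.cos.const_mul μ))).congr_deriv
    (by unfold barrierDeriv2; ring)

lemma barrier_ode (μ x : ℝ) :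
    1/2 * barrierDeriv2 μ x + μ * barrierDeriv μ x = -barrierRate μ * barrier μ x := by
  unfold barrierDeriv2 barrierDeriv barrier barrierRate
  ring

lemma neg_abs_le_neg_mul (hx : x ∈ Icc (0:ℝ) 1) : -|μ| ≤ -μ * x := by
  nlinarith [le_abs_self μ, abs_nonneg μ, hx.1, hx.2]

lemma exp_neg_abs_div_two_le_barrier (hx : x ∈ Icc (0:ℝ) 1) : exp (-|μ|) / 2 ≤ barrier μ x := by
  have hcos : 1/2 ≤ cos (x - 1/2) := by
    nlinarith [one_sub_sq_div_two_le_cos (x := x - 1/2), hx.1, hx.2]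
  have hexp : exp (-|μ|) ≤ exp (-μ * x) := exp_le_exp.2 (neg_abs_le_neg_mul hx)
  calc exp (-|μ|) / 2 = exp (-|μ|) * (1/2) := by ring
    _ ≤ exp (-μ * x) * cos (x - 1/2) := by gcongr

lemma barrier_nonneg (hx : x ∈ Icc (0:ℝ) 1) : 0 ≤ barrier μ x :=
  (by positivity : (0:ℝ) ≤ exp (-|μ|) / 2).trans (exp_neg_abs_div_two_le_barrier hx)

lemma barrier_le_exp_abs (hx : x ∈ Icc (0:ℝ) 1) : barrier μ x ≤ exp |μ| := by
  have hexp : exp (-μ * x) ≤ exp |μ| :=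
    exp_le_exp.2 (by nlinarith [neg_abs_le_neg_mul (μ := -μ) hx, abs_neg μ])
  calc barrier μ x ≤ exp (-μ * x) * 1 := by unfold barrier; gcongr; exact cos_le_one _
    _ ≤ exp |μ| := by rwa [mul_one]

lemma continuous_barrier (μ : ℝ) : Continuous (barrier μ) := by
  unfold barrier
  fun_prop

end Barrier

section Comparison

variable {μ s T A B : ℝ} {v vt vx vxx : ℝ → ℝ → ℝ}

lemma hasParabolicDerivs_barrier (μ s A B ε : ℝ) (I : Set ℝ) :
    HasParabolicDerivs
      (fun t x => A + B * exp (-barrierRate μ * (t - s)) * barrier μ x + ε * (t - s))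
      (fun t x => -barrierRate μ * B * exp (-barrierRate μ * (t - s)) * barrier μ x + ε)
      (fun t x => B * exp (-barrierRate μ * (t - s)) * barrierDeriv μ x)
      (fun t x => B * exp (-barrierRate μ * (t - s)) * barrierDeriv2 μ x) I := by
  intro t _ x _
  have hlin : HasDerivAt (fun τ : ℝ => τ - s) 1 t := (hasDerivAt_id t).sub_const s
  refine ⟨?_, ?_, ?_⟩
  · have := ((((hlin.const_mul (-barrierRate μ)).exp.const_mul B).mul_const (barrier μ x)).const_add
      A).add (hlin.const_mul ε)
    exact this.congr_deriv (by ring)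
  · exact (((hasDerivAt_barrier μ x).const_mul _).const_add A).add_const _
  · exact (hasDerivAt_barrierDeriv μ x).const_mul _

/-- Apply the maximum principle to `v` minus the barrier minus `ε (t - s)`, a strict subsolution,
and let `ε → 0`. -/
theorem le_barrier_of_solution
    (hc : ContinuousOn (fun p : ℝ × ℝ => v p.1 p.2) (Icc s T ×ˢ Icc 0 1))
    (hv : HasParabolicDerivs v vt vx vxx (Ioc s T))
    (hpde : ∀ t ∈ Ioc s T, ∀ x ∈ Ioo (0:ℝ) 1, vt t x = 1/2 * vxx t x + μ * vx t x)
    (hB : 0 ≤ B) (hbdry : ∀ t ∈ Icc s T, v t 0 ≤ A ∧ v t 1 ≤ A)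
    (hinit : ∀ x ∈ Icc (0:ℝ) 1, v s x ≤ A + B * barrier μ x) :
    ∀ t ∈ Icc s T, ∀ x ∈ Icc (0:ℝ) 1,
      v t x ≤ A + B * exp (-barrierRate μ * (t - s)) * barrier μ x := by
  intro t ht x hx
  set W := A + B * exp (-barrierRate μ * (t - s)) * barrier μ x
  have hε : ∀ ε > 0, v t x ≤ W + ε * (t - s) := by
    intro ε hε0
    have hcw : Continuous fun p : ℝ × ℝ =>
        A + B * exp (-barrierRate μ * (p.1 - s)) * barrier μ p.2 + ε * (p.1 - s) := by
      have := continuous_barrier μ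
      fun_prop
    have hmax := nonpos_of_strictSubsolution (μ := μ) (hc.sub hcw.continuousOn)
      (hv.sub (hasParabolicDerivs_barrier μ s A B ε _)) ?_ ?_ ?_ t ht x hx
    · linarith
    · intro τ hτ y hy
      have hgap : 1/2 * (vxx τ y - B * exp (-barrierRate μ * (τ - s)) * barrierDeriv2 μ y)
          + μ * (vx τ y - B * exp (-barrierRate μ * (τ - s)) * barrierDeriv μ y)
          - (vt τ y - (-barrierRate μ * B * exp (-barrierRate μ * (τ - s)) * barrier μ y + ε))
          = ε := by
        rw [hpde τ hτ y hy]
        linear_combination (-(B * exp (-barrierRate μ * (τ - s)))) * barrier_ode μ y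
      linarith
    · intro y hy
      simp only [sub_self, mul_zero, exp_zero, mul_one, add_zero]
      linarith [hinit y hy]
    · intro τ hτ
      have hE := exp_pos (-barrierRate μ * (τ - s))
      have hε' : 0 ≤ ε * (τ - s) := mul_nonneg hε0.le (sub_nonneg.2 hτ.1)
      have h₀ := mul_nonneg (mul_nonneg hB hE.le)
        (barrier_nonneg (μ := μ) (left_mem_Icc.2 zero_le_one))
      have h₁ := mul_nonneg (mul_nonneg hB hE.le)
        (barrier_nonneg (μ := μ) (right_mem_Icc.2 zero_le_one))
      constructor <;> linarith [hbdry τ hτ]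
  have hlim : Tendsto (fun ε => W + ε * (t - s)) (𝓝[>] 0) (𝓝 W) := by
    have : Tendsto (fun ε => W + ε * (t - s)) (𝓝 0) (𝓝 (W + 0 * (t - s))) :=
      (continuous_const.add (continuous_id.mul continuous_const)).tendsto 0
    simpa using this.mono_left nhdsWithin_le_nhds
  exact ge_of_tendsto hlim (eventually_nhdsWithin_of_forall hε)

theorem abs_le_barrier_of_solution
    (hc : ContinuousOn (fun p : ℝ × ℝ => v p.1 p.2) (Icc s T ×ˢ Icc 0 1))
    (hv : HasParabolicDerivs v vt vx vxx (Ioc s T))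
    (hpde : ∀ t ∈ Ioc s T, ∀ x ∈ Ioo (0:ℝ) 1, vt t x = 1/2 * vxx t x + μ * vx t x)
    (hB : 0 ≤ B) (hbdry : ∀ t ∈ Icc s T, |v t 0| ≤ A ∧ |v t 1| ≤ A)
    (hinit : ∀ x ∈ Icc (0:ℝ) 1, |v s x| ≤ A + B * barrier μ x) :
    ∀ t ∈ Icc s T, ∀ x ∈ Icc (0:ℝ) 1,
      |v t x| ≤ A + B * exp (-barrierRate μ * (t - s)) * barrier μ x := by
  intro t ht x hx
  have hupper := le_barrier_of_solution hc hv hpde hB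
    (fun τ hτ => ⟨(le_abs_self _).trans (hbdry τ hτ).1, (le_abs_self _).trans (hbdry τ hτ).2⟩)
    (fun y hy => (le_abs_self _).trans (hinit y hy)) t ht x hx
  have hlower := le_barrier_of_solution (v := fun τ y => -v τ y) hc.neg hv.neg
    (fun τ hτ y hy => by rw [hpde τ hτ y hy]; ring) hB
    (fun τ hτ => ⟨(neg_le_abs _).trans (hbdry τ hτ).1, (neg_le_abs _).trans (hbdry τ hτ).2⟩)
    (fun y hy => (neg_le_abs _).trans (hinit y hy)) t ht x hx
  exact abs_le.2 ⟨by linarith, hupper⟩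

end Comparison

section SupNorm

variable {g : ℝ → ℝ} {c x : ℝ}

lemma unorm_nonneg (g : ℝ → ℝ) : 0 ≤ unorm g :=
  Real.iSup_nonneg fun _ => abs_nonneg _

lemma abs_le_unorm (hg : ContinuousOn g (Icc 0 1)) (hx : x ∈ Icc (0:ℝ) 1) : |g x| ≤ unorm g :=
  le_ciSup (isCompact_range (continuous_abs.comp hg.domRestrict)).bddAbove ⟨x, hx⟩

lemma unorm_le (h : ∀ x ∈ Icc (0:ℝ) 1, |g x| ≤ c) : unorm g ≤ c :=
  have : Nonempty (Icc (0:ℝ) 1) := ⟨⟨0, left_mem_Icc.2 zero_le_one⟩⟩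
  ciSup_le fun x => h x x.2

end SupNorm

lemma ContinuousOn.slice {v : ℝ → ℝ → ℝ} {S : Set ℝ} {t : ℝ}
    (hv : ContinuousOn (fun p : ℝ × ℝ => v p.1 p.2) (S ×ˢ Icc 0 1)) (ht : t ∈ S) :
    ContinuousOn (v t) (Icc 0 1) :=
  hv.comp (continuous_const.prodMk continuous_id).continuousOn fun _ hx => ⟨ht, hx⟩

def TwiceDiffOnUnit (g : ℝ → ℝ) : Prop :=
  (∀ x ∈ Icc (0:ℝ) 1, DifferentiableWithinAt ℝ g (Icc 0 1) x ∧
    DifferentiableWithinAt ℝ (dxI g) (Icc 0 1) x) ∧ ContinuousOn (dxI (dxI g)) (Icc 0 1)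

namespace TwiceDiffOnUnit

variable {g : ℝ → ℝ}

lemma continuousOn (hg : TwiceDiffOnUnit g) : ContinuousOn g (Icc 0 1) :=
  fun x hx => (hg.1 x hx).1.continuousWithinAt

lemma continuousOn_dxI (hg : TwiceDiffOnUnit g) : ContinuousOn (dxI g) (Icc 0 1) :=
  fun x hx => (hg.1 x hx).2.continuousWithinAt

lemma hasDerivAt (hg : TwiceDiffOnUnit g) {x : ℝ} (hx : x ∈ Ioo (0:ℝ) 1) :
    HasDerivAt g (dxI g x) x :=
  hasDerivAt_of_differentiableWithinAt_Icc (hg.1 x (Ioo_subset_Icc_self hx)).1 hx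

lemma hasDerivAt_dxI (hg : TwiceDiffOnUnit g) {x : ℝ} (hx : x ∈ Ioo (0:ℝ) 1) :
    HasDerivAt (dxI g) (dxI (dxI g) x) x :=
  hasDerivAt_of_differentiableWithinAt_Icc (hg.1 x (Ioo_subset_Icc_self hx)).2 hx

end TwiceDiffOnUnit

lemma intervalIntegrable_of_continuousOn_unit {g : ℝ → ℝ} (hg : ContinuousOn g (Icc 0 1)) :
    IntervalIntegrable g volume 0 1 :=
  hg.intervalIntegrable_of_Icc zero_le_one

/-- Green's formula for `L = ½ ∂ₓ² + μ ∂ₓ` and its formal adjoint `L* = ½ ∂ₓ² - μ ∂ₓ`. -/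
theorem integral_drift_mul_eq (μ : ℝ) {w J : ℝ → ℝ} (hw : TwiceDiffOnUnit w)
    (hJ : TwiceDiffOnUnit J) :
    ∫ x in (0:ℝ)..1, (1/2 * dxI (dxI w) x + μ * dxI w x) * J x =
      (1/2 * (dxI w 1 * J 1 - w 1 * dxI J 1) + μ * (w 1 * J 1))
      - (1/2 * (dxI w 0 * J 0 - w 0 * dxI J 0) + μ * (w 0 * J 0))
      + ∫ x in (0:ℝ)..1, w x * (1/2 * dxI (dxI J) x - μ * dxI J x) := by
  have hw₀ := hw.continuousOn
  have hw₁ := hw.continuousOn_dxI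
  have hw₂ := hw.2
  have hJ₀ := hJ.continuousOn
  have hJ₁ := hJ.continuousOn_dxI
  have hJ₂ := hJ.2
  have hint₁ : IntervalIntegrable (fun x => (1/2 * dxI (dxI w) x + μ * dxI w x) * J x)
      volume 0 1 :=
    intervalIntegrable_of_continuousOn_unit (by fun_prop)
  have hint₂ : IntervalIntegrable (fun x => w x * (1/2 * dxI (dxI J) x - μ * dxI J x))
      volume 0 1 :=
    intervalIntegrable_of_continuousOn_unit (by fun_prop)
  have hFTC := intervalIntegral.integral_eq_sub_of_hasDeriv_right_of_le zero_le_one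
    (f := fun x => 1/2 * (dxI w x * J x - w x * dxI J x) + μ * (w x * J x))
    (f' := fun x => (1/2 * dxI (dxI w) x + μ * dxI w x) * J x
      - w x * (1/2 * dxI (dxI J) x - μ * dxI J x))
    (by fun_prop)
    (fun x hx => ((((hw.hasDerivAt_dxI hx).mul (hJ.hasDerivAt hx)).sub
      ((hw.hasDerivAt hx).mul (hJ.hasDerivAt_dxI hx))).const_mul (1/2)).add
      (((hw.hasDerivAt hx).mul (hJ.hasDerivAt hx)).const_mul μ)
      |>.congr_deriv (by ring) |>.hasDerivWithinAt)
    (hint₁.sub hint₂)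
  rw [intervalIntegral.integral_sub hint₁ hint₂] at hFTC
  linarith

namespace MemU

variable {u : ℝ → ℝ → ℝ} {t : ℝ}

lemma hasParabolicDerivs (hU : MemU u) : HasParabolicDerivs u (pt u) (px u) (pxx u) (Ioi 0) := by
  intro t ht x hx
  obtain ⟨hdt, hdx, hdxx⟩ := hU.1 t ht x (Ioo_subset_Icc_self hx)
  exact ⟨hdt.hasDerivAt, hasDerivAt_of_differentiableWithinAt_Icc hdx hx,
    hasDerivAt_of_differentiableWithinAt_Icc hdxx hx⟩

lemma twiceDiffOnUnit (hU : MemU u) (ht : 0 < t) : TwiceDiffOnUnit (u t) :=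
  ⟨fun x hx => ⟨(hU.1 t ht x hx).2.1, (hU.1 t ht x hx).2.2⟩, hU.2.2.2.2.1.slice ht⟩

lemma bddAbove_unorm (hU : MemU u) {s T : ℝ} (hs : 0 < s) :
    BddAbove ((fun t => unorm (u t)) '' Icc s T) := by
  obtain ⟨C, hC⟩ := (isCompact_Icc.prod isCompact_Icc).exists_bound_of_continuousOn
    (hU.2.1.mono (prod_mono (fun τ hτ => hs.trans_le hτ.1) subset_rfl))
  exact ⟨C, by rintro _ ⟨τ, hτ, rfl⟩; exact unorm_le fun x hx => hC (τ, x) ⟨hτ, hx⟩⟩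

/-- Differentiation under the integral sign, dominated by the bound on `∂ₜu` over
`[t/2, 2t] × [0,1]`. -/
lemma hasDerivAt_integral_mul (hU : MemU u) (ht : 0 < t) {J : ℝ → ℝ}
    (hJ : ContinuousOn J (Icc 0 1)) :
    HasDerivAt (fun s => ∫ x in (0:ℝ)..1, u s x * J x) (∫ x in (0:ℝ)..1, pt u t x * J x) t := by
  obtain ⟨C, hC⟩ := hU.2.2.2.2.2.2 (t/2) (2*t) (by positivity) (by linarith)
  have hball : ∀ τ ∈ Metric.ball t (t/2), 0 < τ ∧ τ ∈ Icc (t/2) (2*t) := by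
    intro τ hτ
    rw [Metric.mem_ball, Real.dist_eq, abs_lt] at hτ
    exact ⟨by linarith, by linarith, by linarith⟩
  have hIoc : Ι (0:ℝ) 1 = Ioc 0 1 := uIoc_of_le zero_le_one
  have hmeas : ∀ {g : ℝ → ℝ}, ContinuousOn g (Icc 0 1) →
      AEStronglyMeasurable g (volume.restrict (Ι (0:ℝ) 1)) := fun hg => by
    rw [hIoc]
    exact (hg.mono Ioc_subset_Icc_self).aestronglyMeasurable measurableSet_Ioc
  refine (intervalIntegral.hasDerivAt_integral_of_dominated_loc_of_deriv_le
    (F' := fun τ x => pt u τ x * J x) (bound := fun x => C * |J x|)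
    (Metric.ball_mem_nhds t (half_pos ht)) ?_
    (intervalIntegrable_of_continuousOn_unit ((hU.2.1.slice ht).mul hJ))
    (hmeas ((hU.2.2.1.slice ht).mul hJ)) ?_
    (intervalIntegrable_of_continuousOn_unit (continuousOn_const.mul hJ.abs)) ?_).2
  · filter_upwards [eventually_gt_nhds ht] with τ hτ
    exact hmeas ((hU.2.1.slice hτ).mul hJ)
  · refine ae_of_all _ fun x hx τ hτ => ?_
    rw [hIoc] at hx
    rw [Real.norm_eq_abs, abs_mul]
    exact mul_le_mul_of_nonneg_right (hC τ (hball τ hτ).2 x (Ioc_subset_Icc_self hx)).1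
      (abs_nonneg _)
  · refine ae_of_all _ fun x hx τ hτ => ?_
    rw [hIoc] at hx
    exact (hU.1 τ (hball τ hτ).1 x (Ioc_subset_Icc_self hx)).1.hasDerivAt.mul_const (J x)

end MemU

lemma ConvF.tendsto_integral_mul {u : ℝ → ℝ → ℝ} {f J : ℝ → ℝ} (hU : MemU u) (hconv : ConvF u f)
    (hJ : ContinuousOn J (Icc 0 1)) :
    Tendsto (fun s => ∫ x in (0:ℝ)..1, u s x * J x) (𝓝[>] 0)
      (𝓝 (∫ x in (0:ℝ)..1, f x * J x)) := by
  obtain ⟨C, hC⟩ := hconv.1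
  have hIoc : Ι (0:ℝ) 1 = Ioc 0 1 := uIoc_of_le zero_le_one
  apply intervalIntegral.tendsto_integral_filter_of_dominated_convergence
    (bound := fun x => C * |J x|)
  · filter_upwards [self_mem_nhdsWithin] with s hs
    rw [hIoc]
    exact (((hU.2.1.slice hs).mul hJ).mono Ioc_subset_Icc_self).aestronglyMeasurable
      measurableSet_Ioc
  · filter_upwards [Ioc_mem_nhdsGT_of_mem (left_mem_Ico.2 zero_lt_one)] with s hs
    refine ae_of_all _ fun x hx => ?_
    rw [hIoc] at hx
    rw [Real.norm_eq_abs, abs_mul]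
    exact mul_le_mul_of_nonneg_right (hC s hs x (Ioc_subset_Icc_self hx)) (abs_nonneg _)
  · exact intervalIntegrable_of_continuousOn_unit (continuousOn_const.mul hJ.abs)
  · refine ae_of_all _ fun x hx => ?_
    rw [hIoc] at hx
    exact (hconv.2.1 x (Ioc_subset_Icc_self hx)).mul_const (J x)

section BoundaryFunctional

open Matrix

attribute [local instance] Matrix.linftyOpNormedAddCommGroup

variable {μ σ t : ℝ} {J₀ J₁ f : ℝ → ℝ} {u : ℝ → ℝ → ℝ}

lemma DJ_zero (g : ℝ → ℝ) : DJ J₀ J₁ g 0 = g 0 - ∫ x in (0:ℝ)..1, g x * J₀ x := rfl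

lemma DJ_one (g : ℝ → ℝ) : DJ J₀ J₁ g 1 = g 1 - ∫ x in (0:ℝ)..1, g x * J₁ x := rfl

lemma integral_mul_eq_of_add_eq_zero {w J K₀ K₁ : ℝ → ℝ} {b₀ b₁ : ℝ}
    (hJ : ∀ x ∈ Icc (0:ℝ) 1, J x + b₀ * K₀ x + b₁ * K₁ x = 0) (hw : ContinuousOn w (Icc 0 1))
    (hK₀ : ContinuousOn K₀ (Icc 0 1)) (hK₁ : ContinuousOn K₁ (Icc 0 1)) :
    ∫ x in (0:ℝ)..1, w x * J x =
      -(b₀ * ∫ x in (0:ℝ)..1, w x * K₀ x) - b₁ * ∫ x in (0:ℝ)..1, w x * K₁ x := by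
  have hint₀ : IntervalIntegrable (fun x => -(b₀ * (w x * K₀ x))) volume 0 1 :=
    intervalIntegrable_of_continuousOn_unit (by fun_prop)
  have hint₁ : IntervalIntegrable (fun x => b₁ * (w x * K₁ x)) volume 0 1 :=
    intervalIntegrable_of_continuousOn_unit (by fun_prop)
  rw [← intervalIntegral.integral_const_mul, ← intervalIntegral.integral_const_mul,
    ← intervalIntegral.integral_neg, ← intervalIntegral.integral_sub hint₀ hint₁]
  refine intervalIntegral.integral_congr fun x hx => ?_
  rw [uIcc_of_le zero_le_one] at hx
  linear_combination w x * hJ x hx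

lemma hasDerivAt_integral_mul_of_satEq (hU : MemU u) (hEq : SatEq μ σ u) (ht : 0 < t) {J : ℝ → ℝ}
    (hJ : TwiceDiffOnUnit J) :
    HasDerivAt (fun s => ∫ x in (0:ℝ)..1, u s x * J x)
      ((1/2 * (px u t 1 * J 1 - u t 1 * dxI J 1) + μ * (u t 1 * J 1))
        - (1/2 * (px u t 0 * J 0 - u t 0 * dxI J 0) + μ * (u t 0 * J 0))
        + ∫ x in (0:ℝ)..1, u t x * (1/2 * dxI (dxI J) x - μ * dxI J x)) t := by
  have hpde : ∫ x in (0:ℝ)..1, pt u t x * J x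
      = ∫ x in (0:ℝ)..1, (1/2 * pxx u t x + μ * px u t x) * J x :=
    intervalIntegral.integral_congr_Ioo_of_le zero_le_one fun x hx => by
      rw [hEq.1 t ht x hx]
  have := hU.hasDerivAt_integral_mul ht hJ.continuousOn
  rw [hpde] at this
  exact this.congr_deriv (integral_drift_mul_eq μ (hU.twiceDiffOnUnit ht) hJ)

/-- In Green's formula for `⟨u(t), Jᵢ⟩`, the boundary conditions of (1.1) and the values `J(0)`,
`J(1)` cancel the `∂ₓu` boundary terms, and (R) turns what is left into `-B(J) D^J u`. -/
theorem hasDerivAt_DJ (hU : MemU u) (hEq : SatEq μ σ u) (hJ : SolvesR μ σ J₀ J₁) (ht : 0 < t) :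
    HasDerivAt (fun s => DJ J₀ J₁ (u s)) (-(BJ μ σ J₀ J₁ *ᵥ DJ J₀ J₁ (u t))) t := by
  obtain ⟨hreg, h2₀, h2₁, hR, hJ₀0, hJ₁0, hJ₀1, hJ₁1⟩ := hJ
  have hJ₀ : TwiceDiffOnUnit J₀ := ⟨fun x hx => ⟨(hreg x hx).1, (hreg x hx).2.1⟩, h2₀⟩
  have hJ₁ : TwiceDiffOnUnit J₁ := ⟨fun x hx => ⟨(hreg x hx).2.2.1, (hreg x hx).2.2.2⟩, h2₁⟩
  have hu := hU.2.1.slice ht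
  have hrow₀ := integral_mul_eq_of_add_eq_zero (fun x hx => (hR x hx).1) hu hJ₀.continuousOn
    hJ₁.continuousOn
  have hrow₁ := integral_mul_eq_of_add_eq_zero (fun x hx => (hR x hx).2) hu hJ₀.continuousOn
    hJ₁.continuousOn
  obtain ⟨hbc₀, hbc₁⟩ := hEq.2 t ht
  have hu₀ : HasDerivAt (fun s => u s 0) (pt u t 0) t :=
    (hU.1 t ht 0 (left_mem_Icc.2 zero_le_one)).1.hasDerivAt
  have hu₁ : HasDerivAt (fun s => u s 1) (pt u t 1) t :=
    (hU.1 t ht 1 (right_mem_Icc.2 zero_le_one)).1.hasDerivAt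
  have hd₀ := hu₀.sub (hasDerivAt_integral_mul_of_satEq hU hEq ht hJ₀)
  have hd₁ := hu₁.sub (hasDerivAt_integral_mul_of_satEq hU hEq ht hJ₁)
  rw [hasDerivAt_pi, Fin.forall_fin_two]
  simp only [DJ_zero, DJ_one, Pi.neg_apply, Matrix.mulVec, dotProduct, Fin.sum_univ_two]
  constructor
  · refine hd₀.congr_deriv ?_
    rw [hrow₀, hbc₀, hJ₀0, hJ₀1]
    simp only [BJ, of_apply, cons_val', cons_val_zero, cons_val_one, cons_val_fin_one]
    ring
  · refine hd₁.congr_deriv ?_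
    rw [hrow₁, hbc₁, hJ₁0, hJ₁1]
    simp only [BJ, of_apply, cons_val', cons_val_zero, cons_val_one, cons_val_fin_one]
    ring

lemma ConvF.tendsto_DJ (hU : MemU u) (hconv : ConvF u f) (hJ : SolvesR μ σ J₀ J₁) :
    Tendsto (fun t => DJ J₀ J₁ (u t)) (𝓝[>] 0) (𝓝 (DJ J₀ J₁ f)) := by
  have hJ₀ : ContinuousOn J₀ (Icc 0 1) := fun x hx => (hJ.1 x hx).1.continuousWithinAt
  have hJ₁ : ContinuousOn J₁ (Icc 0 1) := fun x hx => (hJ.1 x hx).2.2.1.continuousWithinAt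
  rw [tendsto_pi_nhds, Fin.forall_fin_two]
  exact ⟨(hconv.2.1 0 (left_mem_Icc.2 zero_le_one)).sub (hconv.tendsto_integral_mul hU hJ₀),
    (hconv.2.1 1 (right_mem_Icc.2 zero_le_one)).sub (hconv.tendsto_integral_mul hU hJ₁)⟩

theorem DJ_eq_zero (hU : MemU u) (hEq : SatEq μ σ u) (hJ : SolvesR μ σ J₀ J₁) (hconv : ConvF u f)
    (hDf : DJ J₀ J₁ f = 0) {t : ℝ} (ht : 0 < t) : DJ J₀ J₁ (u t) = 0 :=
  eq_zero_of_norm_deriv_le_of_tendsto_zero (K := ‖BJ μ σ J₀ J₁‖)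
    (fun _ hs => hasDerivAt_DJ hU hEq hJ hs)
    (fun s _ => by rw [norm_neg]; exact linfty_opNorm_mulVec _ _)
    (hDf ▸ hconv.tendsto_DJ hU hJ) ht

end BoundaryFunctional

lemma mJ_nonneg (J₀ J₁ : ℝ → ℝ) : 0 ≤ mJ J₀ J₁ :=
  (intervalIntegral.integral_nonneg zero_le_one fun _ _ => abs_nonneg _).trans (le_max_left _ _)

lemma abs_integral_mul_le {w J : ℝ → ℝ} {c : ℝ} (hw : ∀ x ∈ Icc (0:ℝ) 1, |w x| ≤ c)
    (hJ : ContinuousOn J (Icc 0 1)) :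
    |∫ x in (0:ℝ)..1, w x * J x| ≤ c * ∫ x in (0:ℝ)..1, |J x| := by
  rw [← intervalIntegral.integral_const_mul, ← Real.norm_eq_abs]
  refine intervalIntegral.norm_integral_le_of_norm_le zero_le_one (ae_of_all _ fun x hx => ?_)
    (intervalIntegrable_of_continuousOn_unit (continuousOn_const.mul hJ.abs))
  rw [Real.norm_eq_abs, abs_mul]
  exact mul_le_mul_of_nonneg_right (hw x (Ioc_subset_Icc_self hx)) (abs_nonneg _)

section Decay

variable {μ σ : ℝ} {J₀ J₁ f : ℝ → ℝ} {u : ℝ → ℝ → ℝ}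

lemma abs_boundary_le (hU : MemU u) (hEq : SatEq μ σ u) (hJ : SolvesR μ σ J₀ J₁)
    (hconv : ConvF u f) (hDf : DJ J₀ J₁ f = 0) {t c : ℝ} (ht : 0 < t)
    (hc : ∀ x ∈ Icc (0:ℝ) 1, |u t x| ≤ c) :
    |u t 0| ≤ mJ J₀ J₁ * c ∧ |u t 1| ≤ mJ J₀ J₁ * c := by
  have hD := DJ_eq_zero hU hEq hJ hconv hDf ht
  have hc0 : 0 ≤ c := (abs_nonneg _).trans (hc 0 (left_mem_Icc.2 zero_le_one))
  have hJ₀ : ContinuousOn J₀ (Icc 0 1) := fun x hx => (hJ.1 x hx).1.continuousWithinAt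
  have hJ₁ : ContinuousOn J₁ (Icc 0 1) := fun x hx => (hJ.1 x hx).2.2.1.continuousWithinAt
  rw [sub_eq_zero.1 ((DJ_zero (u t)).symm.trans (congrFun hD 0)),
    sub_eq_zero.1 ((DJ_one (u t)).symm.trans (congrFun hD 1)), mul_comm]
  exact ⟨(abs_integral_mul_le hc hJ₀).trans (mul_le_mul_of_nonneg_left (le_max_left _ _) hc0),
    (abs_integral_mul_le hc hJ₁).trans (mul_le_mul_of_nonneg_left (le_max_right _ _) hc0)⟩

theorem abs_le_of_forall_abs_le (hU : MemU u) (hEq : SatEq μ σ u) (hJ : SolvesR μ σ J₀ J₁)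
    (hconv : ConvF u f) (hDf : DJ J₀ J₁ f = 0) {s T M : ℝ} (hs : 0 < s)
    (hM : ∀ τ ∈ Icc s T, ∀ x ∈ Icc (0:ℝ) 1, |u τ x| ≤ M) :
    ∀ t ∈ Icc s T, ∀ x ∈ Icc (0:ℝ) 1,
      |u t x| ≤
        mJ J₀ J₁ * M + 2 * exp (2 * |μ|) * unorm (u s) * exp (-barrierRate μ * (t - s)) := by
  intro t ht x hx
  have hpos : Icc s T ⊆ Ioi 0 := fun τ hτ => hs.trans_le hτ.1
  have hM0 : 0 ≤ M := (abs_nonneg _).trans (hM t ht 0 (left_mem_Icc.2 zero_le_one))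
  have hmM : 0 ≤ mJ J₀ J₁ * M := mul_nonneg (mJ_nonneg J₀ J₁) hM0
  have hus : 0 ≤ unorm (u s) := unorm_nonneg _
  have hinit : ∀ y ∈ Icc (0:ℝ) 1,
      |u s y| ≤ mJ J₀ J₁ * M + 2 * exp |μ| * unorm (u s) * barrier μ y := by
    intro y hy
    have hlow := mul_le_mul_of_nonneg_left (exp_neg_abs_div_two_le_barrier (μ := μ) hy)
      (by positivity : 0 ≤ 2 * exp |μ| * unorm (u s))
    have hcancel : 2 * exp |μ| * unorm (u s) * (exp (-|μ|) / 2) = unorm (u s) := by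
      rw [exp_neg]; field_simp
    linarith [abs_le_unorm (hU.2.1.slice (hpos (left_mem_Icc.2 (ht.1.trans ht.2)))) hy]
  have hbar := abs_le_barrier_of_solution (hU.2.1.mono (prod_mono hpos subset_rfl))
    (hU.hasParabolicDerivs.mono (Ioc_subset_Icc_self.trans hpos))
    (fun τ hτ => hEq.1 τ (hpos (Ioc_subset_Icc_self hτ))) (by positivity)
    (fun τ hτ => abs_boundary_le hU hEq hJ hconv hDf (hpos hτ) (hM τ hτ)) hinit t ht x hx
  have hupper := mul_le_mul_of_nonneg_left (barrier_le_exp_abs (μ := μ) hx)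
    (by positivity : 0 ≤ 2 * exp |μ| * unorm (u s) * exp (-barrierRate μ * (t - s)))
  have hexp : exp (2 * |μ|) = exp |μ| * exp |μ| := by rw [two_mul, exp_add]
  rw [hexp]
  linarith

end Decay

theorem stmt9_general (μ σ : ℝ) (J₀ J₁ : ℝ → ℝ)
    (hJ : SolvesR μ σ J₀ J₁) (hm : mJ J₀ J₁ < 1)
    (f : ℝ → ℝ) (hDf : DJ J₀ J₁ f = 0)
    (u : ℝ → ℝ → ℝ) (hU : MemU u) (hEq : SatEq μ σ u) (hconv : ConvF u f) :
    Filter.Tendsto (fun t => unorm (fun x => u t x)) Filter.atTop (nhds 0) :=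
  tendsto_zero_of_le_mul_sup_add_exp (mJ_nonneg J₀ J₁) hm (by positivity) (barrierRate_pos μ)
    (fun _ => unorm_nonneg _) (fun _ _ hs => hU.bddAbove_unorm hs)
    fun _ _ _ hs hM t ht => unorm_le <| abs_le_of_forall_abs_le hU hEq hJ hconv hDf hs
      (fun τ hτ x hx => (abs_le_unorm (hU.2.1.slice (hs.trans_le hτ.1)) hx).trans (hM τ hτ)) t ht

/-- Theorem 2.1, decay: if `J` solves (R) with `m(J) < 1` and `D^J f = 0`,
then `‖u_f(t,·)‖_u → 0` as `t → ∞`. -/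
theorem stmt9 (μ σ : ℝ) (hσ : 0 < σ) (J₀ J₁ : ℝ → ℝ)
    (hJ : SolvesR μ σ J₀ J₁) (hm : mJ J₀ J₁ < 1)
    (f : ℝ → ℝ) (hf : MemF f) (hDf : DJ J₀ J₁ f = 0)
    (u : ℝ → ℝ → ℝ) (hU : MemU u) (hEq : SatEq μ σ u) (hconv : ConvF u f) :
    Filter.Tendsto (fun t => unorm (fun x => u t x)) Filter.atTop (nhds 0) :=
  stmt9_general μ σ J₀ J₁ hJ hm f hDf u hU hEq hconv
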